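/- Let S = ⟨a_1,…,a_n⟩ ⊆ ℤ^m ⊕ T be a reduced monoid. Then the cardinality of S ∖ L_S equals dim_K( K[x_1,…,x_n] / (I_S + in_≺(I_{S̃})) ), where in_≺(I_{S̃}) is the initial ideal of I_{S̃} with respect to any monomial order ≺. -/

import Mathlib

/-!
Send `x_i ↦ t^{a_i} ∈ K[G]` and keep only the coefficients at `S ∖ L_S`. This linear map onto
`K^{(S ∖ L_S)}` is surjective, and its kernel is the ideal of polynomials whose image is supported
on `L_S` (an ideal because `S + L_S ⊆ L_S`). That ideal is `I_S + in_≺(I_{S̃})`: each monomial in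
the support of an element of `I_{S̃}` shares its `S̃`-degree with another one, so its `S`-degree
lies in `L_S`. Conversely, if `b ∈ L_S` has two factorizations of the same length, the larger one
under `≺` is the leading monomial of a binomial of `I_{S̃}` and every monomial of degree `b` is
congruent to it modulo `I_S`, while a fibre over `b ∉ L_S` whose coefficients sum to zero lies
in `I_S`.
-/

open MvPolynomial

/-- The `S`-degree of an exponent vector. -/
def degS {n : ℕ} {G : Type*} [AddCommMonoid G] (a : Fin n → G) (lam : Fin n → ℕ) : G :=
  ∑ i, lam i • a i

/-- The lattice ideal of the monoid generated by `a`. -/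
noncomputable def latticeIdeal (K : Type) [Field K] {n : ℕ} {G : Type*} [AddCommMonoid G]
    (a : Fin n → G) : Ideal (MvPolynomial (Fin n) K) :=
  Ideal.span {f | ∃ α β : Fin n →₀ ℕ, degS a ⇑α = degS a ⇑β ∧
    f = monomial α (1 : K) - monomial β 1}

/-- The set of elements of `S = ⟨a_1,…,a_n⟩` having at least two different factorizations
of the same length. -/
def LSet {n : ℕ} {G : Type*} [AddCommMonoid G] (a : Fin n → G) : Set G :=
  {x | ∃ lam nu : Fin n → ℕ, lam ≠ nu ∧ degS a lam = x ∧ degS a nu = x ∧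
    ∑ i, lam i = ∑ i, nu i}

/-- The initial ideal of `J` with respect to a monomial order `mo`: the ideal generated
by the leading monomials of the nonzero elements of `J`. -/
noncomputable def initialIdeal {n : ℕ} (K : Type) [Field K] (mo : MonomialOrder (Fin n))
    (J : Ideal (MvPolynomial (Fin n) K)) : Ideal (MvPolynomial (Fin n) K) :=
  Ideal.span {g | ∃ f ∈ J, f ≠ 0 ∧ ∃ d ∈ f.support,
    (∀ e ∈ f.support, mo.toSyn e ≤ mo.toSyn d) ∧ g = monomial d (1 : K)}

section AddCommMonoid

variable {K : Type} [Field K] {n : ℕ} {G : Type*} [AddCommMonoid G]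

theorem mem_closure_range_iff_exists_degS {a : Fin n → G} {x : G} :
    x ∈ AddSubmonoid.closure (Set.range a) ↔ ∃ lam, degS a lam = x := by
  simp only [AddSubmonoid.mem_closure_range_iff_of_fintype, degS, eq_comm]

theorem degS_add (a : Fin n → G) (lam nu : Fin n → ℕ) :
    degS a (lam + nu) = degS a lam + degS a nu := by
  simp [degS, add_smul, Finset.sum_add_distrib]

theorem degS_homogenize (a : Fin n → G) (lam : Fin n → ℕ) :
    degS (fun j => (a j, (1 : ℤ))) lam = (degS a lam, ((∑ i, lam i : ℕ) : ℤ)) := by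
  simp [degS, Prod.ext_iff, Prod.fst_sum, Prod.snd_sum]

theorem mem_LSet_iff {a : Fin n → G} {x : G} :
    x ∈ LSet a ↔ ∃ lam nu, lam ≠ nu ∧ degS a lam = x ∧
      degS (fun j => (a j, (1 : ℤ))) lam = degS (fun j => (a j, (1 : ℤ))) nu := by
  simp only [LSet, degS_homogenize, Prod.ext_iff, Nat.cast_inj, Set.mem_ofPred_eq]
  constructor
  · rintro ⟨lam, nu, hne, hl, hn, hlen⟩
    exact ⟨lam, nu, hne, hl, hl.trans hn.symm, hlen⟩
  · rintro ⟨lam, nu, hne, hl, hdeg, hlen⟩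
    exact ⟨lam, nu, hne, hl, hdeg.symm.trans hl, hlen⟩

theorem degS_add_mem_LSet {a : Fin n → G} {b : G} (hb : b ∈ LSet a) (gam : Fin n → ℕ) :
    degS a gam + b ∈ LSet a := by
  obtain ⟨lam, nu, hne, rfl, hn, hlen⟩ := hb
  refine ⟨gam + lam, gam + nu, fun h => hne (add_left_cancel h), degS_add .., ?_, ?_⟩
  · rw [degS_add, hn]
  · simp [Finset.sum_add_distrib, hlen]

variable (K) in
noncomputable def toAddMonoidAlgebra (a : Fin n → G) :
    MvPolynomial (Fin n) K →ₐ[K] AddMonoidAlgebra K G :=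
  aeval fun i => AddMonoidAlgebra.single (a i) 1

theorem toAddMonoidAlgebra_monomial (a : Fin n → G) (α : Fin n →₀ ℕ) (c : K) :
    toAddMonoidAlgebra K a (monomial α c) = AddMonoidAlgebra.single (degS a α) c := by
  simp [toAddMonoidAlgebra, aeval_monomial, AddMonoidAlgebra.single_pow, Finsupp.prod_fintype,
    degS]

open Classical in
theorem coeff_toAddMonoidAlgebra (a : Fin n → G) (f : MvPolynomial (Fin n) K) (b : G) :
    (toAddMonoidAlgebra K a f).coeff b =
      ∑ α ∈ f.support.filter (fun α : Fin n →₀ ℕ => degS a ⇑α = b), coeff α f := by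
  conv_lhs => rw [f.as_sum, map_sum]
  simp [toAddMonoidAlgebra_monomial, AddMonoidAlgebra.coeff_sum, AddMonoidAlgebra.coeff_single,
    Finsupp.single_apply, Finset.sum_filter]

theorem mem_closure_of_coeff_toAddMonoidAlgebra_ne_zero {a : Fin n → G}
    {f : MvPolynomial (Fin n) K} {b : G} (h : (toAddMonoidAlgebra K a f).coeff b ≠ 0) :
    b ∈ AddSubmonoid.closure (Set.range a) := by
  classical
  rw [coeff_toAddMonoidAlgebra] at h
  obtain ⟨α, hα, -⟩ := Finset.exists_ne_zero_of_sum_ne_zero h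
  exact mem_closure_range_iff_exists_degS.mpr ⟨α, (Finset.mem_filter.mp hα).2⟩

theorem binomial_mem_latticeIdeal (a : Fin n → G) {α β : Fin n →₀ ℕ}
    (h : degS a ⇑α = degS a ⇑β) : monomial α (1 : K) - monomial β 1 ∈ latticeIdeal K a :=
  Ideal.subset_span ⟨α, β, h, rfl⟩

theorem latticeIdeal_le_ker (a : Fin n → G) :
    latticeIdeal K a ≤ RingHom.ker (toAddMonoidAlgebra K a) := by
  rw [latticeIdeal, Ideal.span_le]
  rintro _ ⟨α, β, h, rfl⟩
  simp [RingHom.mem_ker, toAddMonoidAlgebra_monomial, h]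

theorem sum_monomial_mem_latticeIdeal (a : Fin n → G) {A : Finset (Fin n →₀ ℕ)}
    {c : (Fin n →₀ ℕ) → K} {b : G} (hA : ∀ α ∈ A, degS a ⇑α = b) (hc : ∑ α ∈ A, c α = 0) :
    ∑ α ∈ A, monomial α (c α) ∈ latticeIdeal K a := by
  rcases A.eq_empty_or_nonempty with rfl | ⟨α₀, hα₀⟩
  · simp
  have hsum : ∑ α ∈ A, monomial α (c α)
      = ∑ α ∈ A, c α • (monomial α (1 : K) - monomial α₀ 1) := by
    rw [Finset.sum_congr rfl fun α _ => smul_sub .., Finset.sum_sub_distrib, ← Finset.sum_smul,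
      hc, zero_smul, sub_zero]
    simp [smul_monomial]
  rw [hsum]
  exact Submodule.sum_mem _ fun α hα => Submodule.smul_of_tower_mem _ _
    (binomial_mem_latticeIdeal a ((hA α hα).trans (hA α₀ hα₀).symm))

theorem exists_ne_mem_support_degS_eq {c : Fin n → G} {f : MvPolynomial (Fin n) K}
    (hf : f ∈ latticeIdeal K c) {d : Fin n →₀ ℕ} (hd : d ∈ f.support) :
    ∃ α ∈ f.support, α ≠ d ∧ degS c ⇑α = degS c ⇑d := by
  classical
  have hfiber := coeff_toAddMonoidAlgebra c f (degS c ⇑d)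
  rw [latticeIdeal_le_ker c hf] at hfiber
  by_contra! hother
  rw [Finset.sum_eq_single_of_mem d (by simp [hd]) fun α hα hne =>
    absurd (Finset.mem_filter.mp hα).2 (hother α (Finset.mem_filter.mp hα).1 hne)] at hfiber
  exact mem_support_iff.mp hd hfiber.symm

theorem degS_mem_LSet_of_mem_support (a : Fin n → G) {f : MvPolynomial (Fin n) K}
    (hf : f ∈ latticeIdeal K fun j => (a j, (1 : ℤ))) {d : Fin n →₀ ℕ} (hd : d ∈ f.support) :
    degS a ⇑d ∈ LSet a := by
  obtain ⟨α, -, hne, hdeg⟩ := exists_ne_mem_support_degS_eq hf hd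
  exact mem_LSet_iff.mpr ⟨d, α, fun h => hne (DFunLike.coe_injective h).symm, rfl, hdeg.symm⟩

theorem monomial_mem_initialIdeal_latticeIdeal (c : Fin n → G) (mo : MonomialOrder (Fin n))
    {μ ν : Fin n →₀ ℕ} (hne : μ ≠ ν) (hdeg : degS c ⇑μ = degS c ⇑ν)
    (hle : mo.toSyn ν ≤ mo.toSyn μ) :
    monomial μ (1 : K) ∈ initialIdeal K mo (latticeIdeal K c) := by
  classical
  have hμ : μ ∈ (monomial μ (1 : K) - monomial ν 1).support := by
    simp [coeff_monomial, hne.symm]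
  refine Ideal.subset_span ⟨_, binomial_mem_latticeIdeal c hdeg, ?_, μ, ?_, ?_, rfl⟩
  · intro h
    simp [h] at hμ
  · exact hμ
  · intro e he
    rcases Finset.mem_union.mp (support_sub _ _ _ he) with he | he <;>
      obtain rfl := Finset.mem_singleton.mp (support_monomial_subset he)
    exacts [le_rfl, hle]

theorem monomial_mem_of_degS_mem_LSet (a : Fin n → G) (mo : MonomialOrder (Fin n))
    {α : Fin n →₀ ℕ} (hα : degS a ⇑α ∈ LSet a) (c : K) :
    monomial α c ∈
      latticeIdeal K a + initialIdeal K mo (latticeIdeal K fun j => (a j, (1 : ℤ))) := by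
  obtain ⟨lam, nu, hne, hl, hdeg⟩ := mem_LSet_iff.mp hα
  set μ := Finsupp.equivFunOnFinite.symm lam
  set ν := Finsupp.equivFunOnFinite.symm nu
  have hnu : degS a nu = degS a ⇑α := by
    simpa [degS_homogenize, hl] using (congrArg Prod.fst hdeg).symm
  have hμν : μ ≠ ν := fun h => hne (by simpa [μ, ν] using congrArg (⇑) h)
  obtain ⟨ρ, hρ, hρ_mem⟩ : ∃ ρ : Fin n →₀ ℕ, degS a ⇑ρ = degS a ⇑α ∧
      monomial ρ (1 : K) ∈ initialIdeal K mo (latticeIdeal K fun j => (a j, (1 : ℤ))) := by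
    rcases le_total (mo.toSyn μ) (mo.toSyn ν) with h | h
    · exact ⟨ν, by simpa [ν] using hnu,
        monomial_mem_initialIdeal_latticeIdeal _ mo hμν.symm (by simpa [μ, ν] using hdeg.symm) h⟩
    · exact ⟨μ, by simpa [μ] using hl,
        monomial_mem_initialIdeal_latticeIdeal _ mo hμν (by simpa [μ, ν] using hdeg) h⟩
  have hsplit : monomial α c = c • (monomial α (1 : K) - monomial ρ 1) + c • monomial ρ 1 := by
    rw [smul_sub, sub_add_cancel, smul_monomial, smul_eq_mul, mul_one]
  rw [hsplit, Submodule.add_eq_sup]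
  exact Submodule.add_mem_sup
    (Submodule.smul_of_tower_mem _ c (binomial_mem_latticeIdeal a hρ.symm))
    (Submodule.smul_of_tower_mem _ c hρ_mem)

variable (K) in
noncomputable def coeffsOnComplLSet (a : Fin n → G) :
    MvPolynomial (Fin n) K →ₗ[K] (↥((AddSubmonoid.closure (Set.range a) : Set G) \ LSet a) →₀ K) :=
  Finsupp.lsubtypeDomain _ ∘ₗ (AddMonoidAlgebra.coeffLinearEquiv K).toLinearMap ∘ₗ
    (toAddMonoidAlgebra K a).toLinearMap

theorem coeffsOnComplLSet_apply (a : Fin n → G) (f : MvPolynomial (Fin n) K) :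
    coeffsOnComplLSet K a f = (toAddMonoidAlgebra K a f).coeff.subtypeDomain
      (· ∈ (AddSubmonoid.closure (Set.range a) : Set G) \ LSet a) :=
  rfl

theorem coeffsOnComplLSet_surjective (a : Fin n → G) :
    Function.Surjective (coeffsOnComplLSet K a) := by
  intro g
  induction g using Finsupp.induction_linear with
  | zero => exact ⟨0, map_zero _⟩
  | add g h hg hh =>
    obtain ⟨p, rfl⟩ := hg
    obtain ⟨q, rfl⟩ := hh
    exact ⟨p + q, map_add ..⟩
  | single d k =>
    obtain ⟨lam, hlam⟩ := mem_closure_range_iff_exists_degS.mp d.2.1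
    refine ⟨monomial (Finsupp.equivFunOnFinite.symm lam) k, ?_⟩
    ext x
    simpa [coeffsOnComplLSet_apply, toAddMonoidAlgebra_monomial, hlam] using
      Finsupp.single_apply_left Subtype.val_injective d x k

end AddCommMonoid

section AddCommGroup

variable {K : Type} [Field K] {n : ℕ} {G : Type*} [AddCommGroup G]

variable (K) in
def lsetIdeal (a : Fin n → G) : Ideal (MvPolynomial (Fin n) K) where
  carrier := {f | ∀ b ∉ LSet a, (toAddMonoidAlgebra K a f).coeff b = 0}
  zero_mem' _ _ := by simp
  add_mem' hf hg b hb := by simp [hf b hb, hg b hb]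
  smul_mem' r f hf := by
    induction r using MvPolynomial.induction_on' with
    | monomial γ c =>
      intro b hb
      rw [smul_eq_mul, map_mul, toAddMonoidAlgebra_monomial,
        AddMonoidAlgebra.coeff_single_mul_apply, hf, mul_zero]
      intro hL
      exact hb (by simpa using degS_add_mem_LSet hL γ)
    | add p q hp hq =>
      intro b hb
      simp only [add_smul, map_add, AddMonoidAlgebra.coeff_add, Finsupp.add_apply, hp b hb,
        hq b hb, add_zero]

theorem latticeIdeal_add_initialIdeal_le_lsetIdeal (a : Fin n → G) (mo : MonomialOrder (Fin n)) :
    latticeIdeal K a + initialIdeal K mo (latticeIdeal K fun j => (a j, (1 : ℤ))) ≤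
      lsetIdeal K a := by
  refine sup_le (fun f hf b _ => by rw [latticeIdeal_le_ker a hf]; rfl) ?_
  rw [initialIdeal, Ideal.span_le]
  rintro _ ⟨f, hf, -, d, hd, -, rfl⟩ b hb
  rw [toAddMonoidAlgebra_monomial, AddMonoidAlgebra.coeff_single, Finsupp.single_eq_of_ne]
  rintro rfl
  exact hb (degS_mem_LSet_of_mem_support a hf hd)

theorem lsetIdeal_le_latticeIdeal_add_initialIdeal (a : Fin n → G) (mo : MonomialOrder (Fin n)) :
    lsetIdeal K a ≤
      latticeIdeal K a + initialIdeal K mo (latticeIdeal K fun j => (a j, (1 : ℤ))) := by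
  classical
  intro f hf
  rw [f.as_sum, ← Finset.sum_fiberwise_of_maps_to (g := fun α : Fin n →₀ ℕ => degS a ⇑α)
    fun α hα => Finset.mem_image_of_mem (fun α : Fin n →₀ ℕ => degS a ⇑α) hα]
  refine Submodule.sum_mem _ fun b _ => ?_
  by_cases hb : b ∈ LSet a
  · exact Submodule.sum_mem _ fun α hα =>
      monomial_mem_of_degS_mem_LSet a mo ((Finset.mem_filter.mp hα).2 ▸ hb) _
  · rw [Submodule.add_eq_sup]
    exact Submodule.mem_sup_left <| sum_monomial_mem_latticeIdeal a
      (fun α hα => (Finset.mem_filter.mp hα).2)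
      ((coeff_toAddMonoidAlgebra a f b).symm.trans (hf b hb))

theorem lsetIdeal_eq (a : Fin n → G) (mo : MonomialOrder (Fin n)) :
    lsetIdeal K a =
      latticeIdeal K a + initialIdeal K mo (latticeIdeal K fun j => (a j, (1 : ℤ))) :=
  le_antisymm (lsetIdeal_le_latticeIdeal_add_initialIdeal a mo)
    (latticeIdeal_add_initialIdeal_le_lsetIdeal a mo)

theorem ker_coeffsOnComplLSet (a : Fin n → G) :
    LinearMap.ker (coeffsOnComplLSet K a) = (lsetIdeal K a).restrictScalars K := by
  ext f
  rw [LinearMap.mem_ker, coeffsOnComplLSet_apply, Finsupp.subtypeDomain_eq_zero_iff',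
    Submodule.restrictScalars_mem]
  refine ⟨fun h b hb => ?_, fun h b hb => h b hb.2⟩
  by_contra hne
  exact hne (h b ⟨mem_closure_of_coeff_toAddMonoidAlgebra_ne_zero hne, hb⟩)

end AddCommGroup

theorem card_compl_LSet_eq_rank_general
    {m n : ℕ} {T : Type} [AddCommGroup T]
    (K : Type) [Field K]
    (a : Fin n → (Fin m → ℤ) × T)
    -- any monomial order:
    (mo : MonomialOrder (Fin n)) :
    Cardinal.mk ((AddSubmonoid.closure (Set.range a) : Set ((Fin m → ℤ) × T)) \ LSet a :
        Set ((Fin m → ℤ) × T)) =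
      Module.rank K (MvPolynomial (Fin n) K ⧸
        (latticeIdeal K a + initialIdeal K mo
          (latticeIdeal K (fun j => ((a j, (1 : ℤ)) : ((Fin m → ℤ) × T) × ℤ))))) := by
  rw [← lsetIdeal_eq a mo]
  calc _ = Module.rank K (_ →₀ K) := (rank_finsupp_self' (R := K)).symm
    _ = Module.rank K (MvPolynomial (Fin n) K ⧸ LinearMap.ker (coeffsOnComplLSet K a)) :=
      (LinearMap.quotKerEquivOfSurjective _ (coeffsOnComplLSet_surjective a)).rank_eq.symm
    _ = _ := by
      rw [ker_coeffsOnComplLSet]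
      exact (Submodule.Quotient.restrictScalarsEquiv K _).rank_eq

/-- **Corollary.** Let `S = ⟨a_1,…,a_n⟩ ⊆ ℤ^m ⊕ T` be a reduced monoid.  Then
`#(S \ L_S) = dim_K K[x_1,…,x_n]/(I_S + in_≺(I_{S̃}))` for any monomial order `≺`. -/
theorem card_compl_LSet_eq_rank
    {m n : ℕ} {T : Type} [AddCommGroup T] [Fintype T]
    (K : Type) [Field K]
    (a : Fin n → (Fin m → ℤ) × T)
    -- `S` is reduced:
    (hred : ∀ x, x ∈ AddSubmonoid.closure (Set.range a) →
      -x ∈ AddSubmonoid.closure (Set.range a) → x = 0)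
    -- `a` is the minimal set of generators:
    (hmin : ∀ i, a i ∉ AddSubmonoid.closure (Set.range a \ {a i}))
    -- any monomial order:
    (mo : MonomialOrder (Fin n)) :
    Cardinal.mk ((AddSubmonoid.closure (Set.range a) : Set ((Fin m → ℤ) × T)) \ LSet a :
        Set ((Fin m → ℤ) × T)) =
      Module.rank K (MvPolynomial (Fin n) K ⧸
        (latticeIdeal K a + initialIdeal K mo
          (latticeIdeal K (fun j => ((a j, (1 : ℤ)) : ((Fin m → ℤ) × T) × ℤ))))) :=
  card_compl_LSet_eq_rank_general K a mo
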